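/- arXiv:1508.02034 — 4 statements merged into one kernel-verified Lean document; each statement's English description precedes it below -/
import Mathlib

section
/- Let M be a monoid generated by a finite set 𝒜. Then M is (1)-sofic with respect to 𝒜 if and only if M is (2)-sofic. -/
/-- Normalized Hamming distance between two self-maps of a (finite) type. -/
noncomputable def dHam {X : Type} (f g : X → X) : ℝ :=
  (({x : X | f x ≠ g x}).ncard : ℝ) / (Nat.card X)

/-- A `(K, ε)`-action of a monoid `M` on a type `X` (intended finite and nonempty):
(i) approximate multiplicativity on `K`, (ii) the identity acts approximately as `id`,
(iii) distinct elements of `K` act almost everywhere differently. -/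
def IsKEAction {M : Type*} [Monoid M] (K : Finset M) (ε : ℝ) {X : Type}
    (ψ : M → X → X) : Prop :=
  (∀ s ∈ K, ∀ t ∈ K, s * t ∈ K → dHam (ψ (s * t)) (ψ s ∘ ψ t) ≤ ε) ∧
  ((1 : M) ∈ K → dHam (ψ 1) id ≤ ε) ∧
  (∀ s ∈ K, ∀ t ∈ K, s ≠ t → 1 - ε ≤ dHam (ψ s) (ψ t))

/-- A monoid is (2)-sofic if for every finite `K ⊆ M` and every `ε > 0` it admits a
`(K, ε)`-action on some nonempty finite set. -/
def IsSofic2 (M : Type*) [Monoid M] : Prop :=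
  ∀ (K : Finset M) (ε : ℝ), 0 < ε →
    ∃ (X : Type), Finite X ∧ Nonempty X ∧ ∃ ψ : M → X → X, IsKEAction K ε ψ

/-- `reach E r x y` : there is a directed path of length at most `r` from `x` to `y`
in the directed labeled graph with edge relation `E` (an edge from `x` to `y`
labeled `a` iff `E x a y`). -/
def reach {V A : Type*} (E : V → A → V → Prop) : ℕ → V → V → Prop
  | 0, x, y => x = y
  | n + 1, x, y => reach E n x y ∨ ∃ z a, reach E n x z ∧ E z a y

theorem reach_self {V A : Type*} (E : V → A → V → Prop) (r : ℕ) (x : V) :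
    reach E r x x := by
  induction r with
  | zero => rfl
  | succ n ih => exact Or.inl ih

/-- `BallIso E x E' x' r` : the ball of radius `r` centered at `x` in the directed
`A`-labeled graph `(V, E)` (the subgraph induced on vertices at directed distance `≤ r`
from `x`, rooted at `x`) is isomorphic, as a rooted directed `A`-labeled graph, to the
ball of radius `r` centered at `x'` in `(V', E')`. -/
def BallIso {V V' A : Type*} (E : V → A → V → Prop) (x : V)
    (E' : V' → A → V' → Prop) (x' : V') (r : ℕ) : Prop :=
  ∃ φ : {y : V // reach E r x y} ≃ {y : V' // reach E' r x' y},
    (φ ⟨x, reach_self E r x⟩ : {y : V' // reach E' r x' y}).1 = x' ∧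
    ∀ (y z : {y : V // reach E r x y}) (a : A),
      E y.1 a z.1 ↔ E' (φ y).1 a (φ z).1

/-- The edge relation of the left Cayley graph of `M` with respect to `𝒜`:
for each `a ∈ 𝒜` and `s ∈ M` there is an edge from `s` to `a * s` labeled `a`. -/
def cayleyE (M : Type*) [Monoid M] (𝒜 : Finset M) : M → 𝒜 → M → Prop :=
  fun s a t => t = (a : M) * s

/-- A monoid `M` generated by a finite set `𝒜` is (1)-sofic with respect to `𝒜` if for
every radius `r` and every `ε > 0` there is a finite nonempty directed `𝒜`-labeled
graph in which the proportion of vertices whose `r`-ball is isomorphic to the `r`-ball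
`M_{r,𝒜}` centered at the identity in the Cayley graph of `M` is at least `1 - ε`. -/
def IsSofic1 (M : Type*) [Monoid M] (𝒜 : Finset M) : Prop :=
  ∀ (r : ℕ) (ε : ℝ), 0 < ε →
    ∃ (V : Type), Finite V ∧ Nonempty V ∧ ∃ E : V → 𝒜 → V → Prop,
      (1 - ε) * (Nat.card V : ℝ) ≤
        (({x : V | BallIso E x (cayleyE M 𝒜) (1 : M) r}).ncard : ℝ)




/-! A `(K, ε)`-action is, up to a factor depending only on `|K|`, the same as a map `ψ` that
is exact at a proportion `1 - ε` of the points: `ψ 1 x = x`, `ψ (s t) x = ψ s (ψ t x)` and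
`s ↦ ψ s x` is injective on `K`. At such a point `x`, with `K` the ball of radius `r + 1` of the
Cayley graph, `s ↦ ψ s x` is an isomorphism from the `r`-ball of the Cayley graph onto the
`r`-ball around `x` in the graph with `a`-labelled edges `v → ψ a v`. Conversely, in a graph
where most `2r`-balls look like the Cayley ball, let `s` act by following the edges of a fixed
word for `s` of length at most `r`; around a good vertex two words of length at most `2r` lead
to the same vertex exactly when they have the same product, so this map is exact there. -/

section Reach

variable {V A : Type*} {E : V → A → V → Prop}

theorem reach_mono {m n : ℕ} (h : m ≤ n) {x y : V} (hr : reach E m x y) : reach E n x y := by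
  induction n, h using Nat.le_induction with
  | base => exact hr
  | succ n _ ih => exact Or.inl ih

theorem finite_setOf_reach [Finite A] (hE : ∀ z a, {y | E z a y}.Finite) (n : ℕ) (x : V) :
    {y | reach E n x y}.Finite := by
  induction n with
  | zero => simp [reach]
  | succ n ih =>
    have hball : {y | reach E (n + 1) x y} =
        {y | reach E n x y} ∪ ⋃ z ∈ {y | reach E n x y}, ⋃ a, {y | E z a y} := by
      ext y; simp [reach]
    rw [hball]
    exact ih.union (ih.biUnion fun z _ => Set.finite_iUnion fun a => hE z a)

open Classical in
noncomputable def edgeStep (E : V → A → V → Prop) (a : A) (v : V) : V :=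
  if h : ∃ w, E v a w then h.choose else v

theorem edgeStep_eq {a : A} {v w : V} (hw : E v a w) (huniq : ∀ z, E v a z → z = w) :
    edgeStep E a v = w := by
  have h : ∃ w, E v a w := ⟨w, hw⟩
  rw [edgeStep, dif_pos h]
  exact huniq _ h.choose_spec

end Reach

section Hamming

variable {X : Type} [Finite X] [Nonempty X]

theorem ncard_ne_le_of_dHam_le {f g : X → X} {c : ℝ} (h : dHam f g ≤ c) :
    ({x | f x ≠ g x}.ncard : ℝ) ≤ c * Nat.card X := by
  rwa [dHam, div_le_iff₀ (by exact_mod_cast Nat.card_pos)] at h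

theorem ncard_eq_le_of_one_sub_le_dHam {f g : X → X} {c : ℝ}
    (h : 1 - c ≤ dHam f g) : ({x | f x = g x}.ncard : ℝ) ≤ c * Nat.card X := by
  rw [dHam, le_div_iff₀ (by exact_mod_cast Nat.card_pos)] at h
  have hcompl := Set.ncard_add_ncard_compl {x | f x ≠ g x}
  simp only [Set.compl_ofPred, not_not] at hcompl
  have : ({x | f x ≠ g x}.ncard : ℝ) + {x | f x = g x}.ncard = Nat.card X := by
    exact_mod_cast hcompl
  linarith

theorem dHam_le_of_eqOn {f g : X → X} {G : Set X} {c : ℝ} (hfg : Set.EqOn f g G)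
    (hG : (1 - c) * Nat.card X ≤ G.ncard) : dHam f g ≤ c := by
  rw [dHam, div_le_iff₀ (by exact_mod_cast Nat.card_pos)]
  have hsub : {x | f x ≠ g x} ⊆ Gᶜ := fun x hx hxG => hx (hfg hxG)
  have hle : ({x | f x ≠ g x}.ncard : ℝ) ≤ Gᶜ.ncard := by
    exact_mod_cast Set.ncard_le_ncard hsub
  have hcompl : (G.ncard : ℝ) + Gᶜ.ncard = Nat.card X := by
    exact_mod_cast Set.ncard_add_ncard_compl G
  linarith

theorem one_sub_le_dHam_of_ne {f g : X → X} {G : Set X} {c : ℝ}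
    (hfg : ∀ x ∈ G, f x ≠ g x) (hG : (1 - c) * Nat.card X ≤ G.ncard) :
    1 - c ≤ dHam f g := by
  rw [dHam, le_div_iff₀ (by exact_mod_cast Nat.card_pos)]
  exact hG.trans (by exact_mod_cast Set.ncard_le_ncard hfg)

end Hamming

theorem cast_ncard_biUnion_le_card_mul {ι α : Type*} (s : Finset ι) (B : ι → Set α) {b : ℝ}
    (h : ∀ i ∈ s, ((B i).ncard : ℝ) ≤ b) :
    ((⋃ i ∈ s, B i).ncard : ℝ) ≤ s.card * b := by
  calc ((⋃ i ∈ s, B i).ncard : ℝ) ≤ ∑ i ∈ s, ((B i).ncard : ℝ) := by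
        exact_mod_cast s.set_ncard_biUnion_le B
    _ ≤ s.card * b := by simpa using s.sum_le_card_nsmul _ b h

section Exact

variable {M : Type*} [Monoid M] {X : Type}

def IsExactAt (K : Finset M) (ψ : M → X → X) (x : X) : Prop :=
  (∀ s ∈ K, ∀ t ∈ K, s * t ∈ K → ψ (s * t) x = ψ s (ψ t x)) ∧
  ((1 : M) ∈ K → ψ 1 x = x) ∧
  (∀ s ∈ K, ∀ t ∈ K, s ≠ t → ψ s x ≠ ψ t x)

variable [Finite X] [Nonempty X] {K : Finset M} {ψ : M → X → X}

theorem isKEAction_of_le_ncard_isExactAt {ε : ℝ}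
    (h : (1 - ε) * Nat.card X ≤ {x | IsExactAt K ψ x}.ncard) : IsKEAction K ε ψ :=
  ⟨fun s hs t ht hst => dHam_le_of_eqOn (fun _ hx => hx.1 s hs t ht hst) h,
    fun h1 => dHam_le_of_eqOn (fun _ hx => hx.2.1 h1) h,
    fun s hs t ht hst => one_sub_le_dHam_of_ne (fun _ hx => hx.2.2 s hs t ht hst) h⟩

theorem ncard_not_isExactAt_le {δ : ℝ} (hδ : 0 ≤ δ) (hψ : IsKEAction K δ ψ) :
    ({x | ¬IsExactAt K ψ x}.ncard : ℝ) ≤ (2 * K.card ^ 2 + 1) * (δ * Nat.card X) := by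
  obtain ⟨hmul, hone, hsep⟩ := hψ
  have hcond : ∀ (q : Prop) (B : Set X), (q → (B.ncard : ℝ) ≤ δ * Nat.card X) →
      ({x | q ∧ x ∈ B}.ncard : ℝ) ≤ δ * Nat.card X := by
    intro q B hB
    by_cases hq : q
    · simpa [hq] using hB hq
    · simpa [hq] using by positivity
  let Bone : Set X := {x | (1 : M) ∈ K ∧ x ∈ {x | ψ 1 x ≠ id x}}
  let Bmul (p : M × M) : Set X :=
    {x | p.1 * p.2 ∈ K ∧ x ∈ {x | ψ (p.1 * p.2) x ≠ (ψ p.1 ∘ ψ p.2) x}}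
  let Bsep (p : M × M) : Set X := {x | p.1 ≠ p.2 ∧ x ∈ {x | ψ p.1 x = ψ p.2 x}}
  have hcover : {x | ¬IsExactAt K ψ x} ⊆
      Bone ∪ (⋃ p ∈ K ×ˢ K, Bmul p) ∪ ⋃ p ∈ K ×ˢ K, Bsep p := by
    intro x hx
    by_contra hbad
    simp only [Set.mem_union, Set.mem_iUnion, Finset.mem_product, not_or, not_exists] at hbad
    obtain ⟨⟨hbone, hbmul⟩, hbsep⟩ := hbad
    refine hx ⟨fun s hs t ht hst => ?_, fun h1 => ?_, fun s hs t ht hst heq => ?_⟩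
    · by_contra hne; exact hbmul (s, t) ⟨hs, ht⟩ ⟨hst, hne⟩
    · by_contra hne; exact hbone ⟨h1, hne⟩
    · exact hbsep (s, t) ⟨hs, ht⟩ ⟨hst, heq⟩
  have hcount : {x | ¬IsExactAt K ψ x}.ncard ≤
      Bone.ncard + (⋃ p ∈ K ×ˢ K, Bmul p).ncard + (⋃ p ∈ K ×ˢ K, Bsep p).ncard :=
    (Set.ncard_le_ncard hcover).trans
      ((Set.ncard_union_le _ _).trans (Nat.add_le_add_right (Set.ncard_union_le _ _) _))
  have hBone : (Bone.ncard : ℝ) ≤ δ * Nat.card X :=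
    hcond _ _ fun h1 => ncard_ne_le_of_dHam_le (hone h1)
  have hBmul : ((⋃ p ∈ K ×ˢ K, Bmul p).ncard : ℝ) ≤ K.card ^ 2 * (δ * Nat.card X) := by
    rw [sq, ← Nat.cast_mul, ← Finset.card_product]
    refine cast_ncard_biUnion_le_card_mul _ _ fun p hp => hcond _ _ fun h => ?_
    obtain ⟨hs, ht⟩ := Finset.mem_product.1 hp
    exact ncard_ne_le_of_dHam_le (hmul _ hs _ ht h)
  have hBsep : ((⋃ p ∈ K ×ˢ K, Bsep p).ncard : ℝ) ≤ K.card ^ 2 * (δ * Nat.card X) := by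
    rw [sq, ← Nat.cast_mul, ← Finset.card_product]
    refine cast_ncard_biUnion_le_card_mul _ _ fun p hp => hcond _ _ fun h => ?_
    obtain ⟨hs, ht⟩ := Finset.mem_product.1 hp
    exact ncard_eq_le_of_one_sub_le_dHam (hsep _ hs _ ht h)
  have hcount' : ({x | ¬IsExactAt K ψ x}.ncard : ℝ) ≤
      Bone.ncard + (⋃ p ∈ K ×ˢ K, Bmul p).ncard + (⋃ p ∈ K ×ˢ K, Bsep p).ncard := by
    exact_mod_cast hcount
  linarith

theorem one_sub_mul_le_ncard_isExactAt {δ : ℝ} (hδ : 0 ≤ δ) (hψ : IsKEAction K δ ψ) :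
    (1 - (2 * K.card ^ 2 + 1) * δ) * Nat.card X ≤ {x | IsExactAt K ψ x}.ncard := by
  have hcompl := Set.ncard_add_ncard_compl {x | IsExactAt K ψ x}
  rw [Set.compl_ofPred] at hcompl
  have : ({x | IsExactAt K ψ x}.ncard : ℝ) + {x | ¬IsExactAt K ψ x}.ncard = Nat.card X := by
    exact_mod_cast hcompl
  linarith [ncard_not_isExactAt_le hδ hψ]

end Exact

section ActionGraph

variable {M : Type*} [Monoid M] {𝒜 : Finset M} {X : Type}

def actionGraph (ψ : M → X → X) (𝒜 : Finset M) : X → 𝒜 → X → Prop :=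
  fun v a w => ψ a v = w

theorem reach_cayleyE_generator (a : 𝒜) (r : ℕ) :
    reach (cayleyE M 𝒜) (r + 1) 1 (a : M) :=
  Or.inr ⟨1, a, reach_self _ r 1, (mul_one _).symm⟩

variable {K : Finset M} {ψ : M → X → X} {x : X} {r : ℕ}
  (hK : ∀ s, reach (cayleyE M 𝒜) (r + 1) 1 s → s ∈ K) (hx : IsExactAt K ψ x)
include hK hx

theorem IsExactAt.apply_generator_mul {a : 𝒜} {s : M} (hs : reach (cayleyE M 𝒜) r 1 s) :
    ψ (a * s) x = ψ a (ψ s x) :=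
  hx.1 _ (hK _ (reach_cayleyE_generator a r)) _ (hK _ (reach_mono r.le_succ hs))
    (hK _ (Or.inr ⟨s, a, hs, rfl⟩))

theorem IsExactAt.injOn_ball {s t : M} (hs : reach (cayleyE M 𝒜) (r + 1) 1 s)
    (ht : reach (cayleyE M 𝒜) (r + 1) 1 t) (hst : ψ s x = ψ t x) : s = t := by
  by_contra hne
  exact hx.2.2 s (hK s hs) t (hK t ht) hne hst

theorem IsExactAt.reach_actionGraph_iff {n : ℕ} (hn : n ≤ r) {y : X} :
    reach (actionGraph ψ 𝒜) n x y ↔ ∃ s, reach (cayleyE M 𝒜) n 1 s ∧ ψ s x = y := by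
  induction n generalizing y with
  | zero =>
    have hone : ψ 1 x = x := hx.2.1 (hK 1 (reach_self _ _ 1))
    simp [reach, hone]
  | succ n ih =>
    simp only [reach, ih (by omega)]
    constructor
    · rintro (⟨s, hs, rfl⟩ | ⟨z, a, ⟨s, hs, rfl⟩, rfl⟩)
      · exact ⟨s, Or.inl hs, rfl⟩
      · exact ⟨a * s, Or.inr ⟨s, a, hs, rfl⟩,
          hx.apply_generator_mul hK (reach_mono (by omega) hs)⟩
    · rintro ⟨s, hs | ⟨t, a, ht, rfl⟩, rfl⟩
      · exact Or.inl ⟨s, hs, rfl⟩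
      · exact Or.inr ⟨ψ t x, a, ⟨t, ht, rfl⟩,
          (hx.apply_generator_mul hK (reach_mono (by omega) ht)).symm⟩

theorem IsExactAt.ballIso_actionGraph : BallIso (actionGraph ψ 𝒜) x (cayleyE M 𝒜) 1 r := by
  let e : {s // reach (cayleyE M 𝒜) r 1 s} → {y // reach (actionGraph ψ 𝒜) r x y} :=
    fun s => ⟨ψ s x, (hx.reach_actionGraph_iff hK le_rfl).2 ⟨s, s.2, rfl⟩⟩
  have he : e.Bijective := by
    refine ⟨fun s t hst => Subtype.ext ?_, fun y => ?_⟩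
    · exact hx.injOn_ball hK (reach_mono r.le_succ s.2) (reach_mono r.le_succ t.2)
        (congrArg Subtype.val hst)
    · obtain ⟨s, hs, hsy⟩ := (hx.reach_actionGraph_iff hK le_rfl).1 y.2
      exact ⟨⟨s, hs⟩, Subtype.ext hsy⟩
  let φ := Equiv.ofBijective e he
  refine ⟨φ.symm, ?_, fun y z a => ?_⟩
  · have hroot : φ ⟨1, reach_self _ r 1⟩ = ⟨x, reach_self _ r x⟩ :=
      Subtype.ext (hx.2.1 (hK 1 (reach_self _ _ 1)))
    rw [← hroot, Equiv.symm_apply_apply]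
  · obtain ⟨s, rfl⟩ := φ.surjective y
    obtain ⟨t, rfl⟩ := φ.surjective z
    simp only [Equiv.symm_apply_apply]
    show ψ a (ψ s x) = ψ t x ↔ t.1 = a * s
    rw [← hx.apply_generator_mul hK s.2]
    have has : reach (cayleyE M 𝒜) (r + 1) 1 (a * s) := Or.inr ⟨s, a, s.2, rfl⟩
    exact ⟨fun h => (hx.injOn_ball hK has (reach_mono r.le_succ t.2) h).symm,
      fun h => h ▸ rfl⟩

end ActionGraph

theorem IsSofic2.isSofic1 {M : Type*} [Monoid M] (𝒜 : Finset M) (h : IsSofic2 M) :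
    IsSofic1 M 𝒜 := by
  intro r ε hε
  have hball : {s | reach (cayleyE M 𝒜) (r + 1) 1 s}.Finite :=
    finite_setOf_reach (fun s a => by simp [cayleyE]) _ _
  set K := hball.toFinset
  set c : ℝ := 2 * K.card ^ 2 + 1
  obtain ⟨X, hX, hXne, ψ, hψ⟩ := h K (ε / c) (by positivity)
  refine ⟨X, hX, hXne, actionGraph ψ 𝒜, ?_⟩
  calc (1 - ε) * Nat.card X = (1 - c * (ε / c)) * Nat.card X := by
        rw [mul_div_cancel₀ ε (by positivity)]
    _ ≤ {x | IsExactAt K ψ x}.ncard := one_sub_mul_le_ncard_isExactAt (by positivity) hψ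
    _ ≤ _ := Nat.cast_le.2 <| Set.ncard_le_ncard fun x hx =>
        hx.ballIso_actionGraph fun s hs => hball.mem_toFinset.2 hs

section Words

variable {M : Type*} [Monoid M] {𝒜 : Finset M}

theorem reach_cayleyE_prod (l : List 𝒜) :
    reach (cayleyE M 𝒜) l.length 1 (l.map (↑)).prod := by
  induction l with
  | nil => exact reach_self _ 0 1
  | cons a l ih => exact Or.inr ⟨_, a, ih, rfl⟩

theorem exists_list_prod_eq (h𝒜 : Submonoid.closure (𝒜 : Set M) = ⊤) (s : M) :
    ∃ l : List 𝒜, (l.map (↑)).prod = s := by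
  obtain ⟨l, hl, rfl⟩ := Submonoid.exists_list_of_mem_closure (h𝒜 ▸ Submonoid.mem_top s)
  lift l to List 𝒜 using hl
  exact ⟨l, rfl⟩

variable {V : Type} {E : V → 𝒜 → V → Prop} {y : V} {R : ℕ}

theorem exists_reach_foldr_edgeStep
    (φ : {v // reach E R y v} ≃ {s // reach (cayleyE M 𝒜) R 1 s})
    (hroot : (φ ⟨y, reach_self E R y⟩).1 = 1)
    (hedge : ∀ v w a, E v.1 a w.1 ↔ cayleyE M 𝒜 (φ v).1 a (φ w).1)
    (l : List 𝒜) (hl : l.length ≤ R) :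
    ∃ h : reach E l.length y (l.foldr (edgeStep E) y),
      (φ ⟨_, reach_mono hl h⟩).1 = (l.map (↑)).prod := by
  induction l with
  | nil => exact ⟨rfl, hroot⟩
  | cons a l ih =>
    rw [List.length_cons] at hl
    obtain ⟨hv, hφv⟩ := ih (by omega)
    set v := l.foldr (edgeStep E) y
    set p := (l.map ((↑) : 𝒜 → M)).prod
    have hvR : reach E R y v := reach_mono (by omega) hv
    let w := φ.symm ⟨a * p, reach_mono hl (Or.inr ⟨p, a, reach_cayleyE_prod l, rfl⟩)⟩
    have hφw : (φ w).1 = a * p := by simp [w]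
    have hEw : E v a w.1 := (hedge ⟨v, hvR⟩ w a).2 (by rw [hφw, ← hφv]; rfl)
    have huniq : ∀ z, E v a z → z = w.1 := by
      intro z hz
      have hzR : reach E R y z := reach_mono hl (Or.inr ⟨v, a, hv, hz⟩)
      have hφz : (φ ⟨z, hzR⟩).1 = a * p := by
        rw [(hedge ⟨v, hvR⟩ ⟨z, hzR⟩ a).1 hz, ← hφv]
      exact congrArg Subtype.val (φ.injective (Subtype.ext (hφz.trans hφw.symm)))
    rw [List.foldr_cons, edgeStep_eq hEw huniq]
    exact ⟨Or.inr ⟨v, a, hv, hEw⟩, hφw⟩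

theorem BallIso.foldr_edgeStep_eq_iff (hy : BallIso E y (cayleyE M 𝒜) 1 R)
    {l₁ l₂ : List 𝒜} (hl₁ : l₁.length ≤ R) (hl₂ : l₂.length ≤ R) :
    l₁.foldr (edgeStep E) y = l₂.foldr (edgeStep E) y ↔
      (l₁.map ((↑) : 𝒜 → M)).prod = (l₂.map (↑)).prod := by
  obtain ⟨φ, hroot, hedge⟩ := hy
  obtain ⟨h₁, hφ₁⟩ := exists_reach_foldr_edgeStep φ hroot hedge l₁ hl₁
  obtain ⟨h₂, hφ₂⟩ := exists_reach_foldr_edgeStep φ hroot hedge l₂ hl₂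
  rw [← hφ₁, ← hφ₂, Subtype.val_inj, φ.apply_eq_iff_eq, Subtype.mk.injEq]

theorem BallIso.isExactAt_foldr_edgeStep {word : M → List 𝒜}
    (hword : ∀ s, ((word s).map (↑)).prod = s) {K : Finset M} {r : ℕ}
    (hr : ∀ s ∈ K, (word s).length ≤ r) (hy : BallIso E y (cayleyE M 𝒜) 1 (2 * r)) :
    IsExactAt K (fun s v => (word s).foldr (edgeStep E) v) y := by
  refine ⟨fun s hs t ht hst => ?_, fun h1 => ?_, fun s hs t ht hst => ?_⟩ <;> beta_reduce
  · rw [← List.foldr_append, hy.foldr_edgeStep_eq_iff (by linarith [hr _ hst])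
      (by simp only [List.length_append]; linarith [hr _ hs, hr _ ht])]
    rw [List.map_append, List.prod_append, hword, hword, hword]
  · change _ = List.foldr (edgeStep E) y []
    rw [hy.foldr_edgeStep_eq_iff (by linarith [hr _ h1]) (Nat.zero_le _), hword]
    rfl
  · rwa [Ne, hy.foldr_edgeStep_eq_iff (by linarith [hr _ hs]) (by linarith [hr _ ht]), hword,
      hword]

end Words

theorem IsSofic1.isSofic2 {M : Type*} [Monoid M] {𝒜 : Finset M}
    (h𝒜 : Submonoid.closure (𝒜 : Set M) = ⊤) (h : IsSofic1 M 𝒜) : IsSofic2 M := by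
  choose word hword using exists_list_prod_eq h𝒜
  intro K ε hε
  obtain ⟨V, hV, hVne, E, hE⟩ := h (2 * K.sup fun s => (word s).length) ε hε
  refine ⟨V, hV, hVne, fun s v => (word s).foldr (edgeStep E) v,
    isKEAction_of_le_ncard_isExactAt (hE.trans (Nat.cast_le.2 (Set.ncard_le_ncard ?_)))⟩
  exact fun y hy => hy.isExactAt_foldr_edgeStep hword fun s hs =>
    Finset.le_sup (f := fun s => (word s).length) hs

/-- A monoid generated by a finite set `𝒜` is (1)-sofic with respect to `𝒜` if and
only if it is (2)-sofic. -/
theorem sofic1_iff_sofic2 {M : Type*} [Monoid M] (𝒜 : Finset M)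
    (h𝒜 : Submonoid.closure (𝒜 : Set M) = ⊤) :
    IsSofic1 M 𝒜 ↔ IsSofic2 M :=
  ⟨fun h => h.isSofic2 h𝒜, IsSofic2.isSofic1 𝒜⟩
end

section
/- Every (3)-sofic monoid embeds into a sofic group: if a monoid M is (3)-sofic, then there exist a sofic group G and an injective multiplicative homomorphism M → G. -/
/-- A group is sofic if for every finite `K ⊆ G` and every `ε > 0` it admits a
`(K, ε)`-action on some nonempty finite set. -/
def IsSoficGroup (G : Type*) [Group G] : Prop :=
  ∀ (K : Finset G) (ε : ℝ), 0 < ε →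
    ∃ (X : Type), Finite X ∧ Nonempty X ∧ ∃ ψ : G → X → X, IsKEAction K ε ψ

/-- A monoid is (3)-sofic if for every finite `K ⊆ M` and every `ε > 0` it admits a
`(K, ε)`-action on some nonempty finite set `X` such that the uniform probability
measure on `X` is approximately invariant: for every `s ∈ K` and every `E ⊆ X`,
`| |E| - |ψ(s)⁻¹(E)| | ≤ ε * |X|`. -/
def IsSofic3 (M : Type*) [Monoid M] : Prop :=
  ∀ (K : Finset M) (ε : ℝ), 0 < ε →
    ∃ (X : Type), Finite X ∧ Nonempty X ∧ ∃ ψ : M → X → X, IsKEAction K ε ψ ∧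
      ∀ s ∈ K, ∀ E : Set X,
        |(E.ncard : ℝ) - ((ψ s ⁻¹' E).ncard : ℝ)| ≤ ε * (Nat.card X : ℝ)


/-!
Each map `ψ s` of a (3)-sofic approximation almost preserves the uniform measure, so its image
misses few points and it is Hamming-close to a permutation `σ s`. Along an ultrafilter on the
pairs (finite `K ⊆ M`, precision `1 / (n + 1)`), these permutations become an injective
homomorphism into the metric ultraproduct of the symmetric groups `Equiv.Perm (X i)`.

That ultraproduct is sofic: representatives of finitely many of its elements act on some `X i`
almost multiplicatively, but distinct elements are only `δ`-separated for some `δ > 0`. The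
diagonal action on `Fin n → X i` turns separation `δ` into `1 - (1 - δ) ^ n`, while multiplying
the multiplicativity defects by at most `n` (Bernoulli's inequality).
-/

open Filter Topology

section Hamming

variable {X : Type}

theorem dHam_nonneg (f g : X → X) : 0 ≤ dHam f g := by
  unfold dHam; positivity

theorem dHam_comm (f g : X → X) : dHam f g = dHam g f := by
  simp only [dHam, ne_comm]

theorem dHam_self (f : X → X) : dHam f f = 0 := by
  simp [dHam]

theorem dHam_comp_left_of_injective {h : X → X} (hh : h.Injective) (f g : X → X) :
    dHam (h ∘ f) (h ∘ g) = dHam f g := by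
  simp only [dHam, Function.comp_apply, hh.ne_iff]

theorem dHam_comp_right_of_bijective {h : X → X} (hh : h.Bijective) (f g : X → X) :
    dHam (f ∘ h) (g ∘ h) = dHam f g := by
  have : {x | (f ∘ h) x ≠ (g ∘ h) x} = h ⁻¹' {x | f x ≠ g x} := rfl
  rw [dHam, dHam, this,
    Set.ncard_preimage_of_injective_subset_range hh.injective (by simp [hh.surjective.range_eq])]

variable [Finite X]

theorem dHam_le_one (f g : X → X) : dHam f g ≤ 1 := by
  unfold dHam
  apply div_le_one_of_le₀ _ (Nat.cast_nonneg _)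
  exact_mod_cast (Set.ncard_le_ncard (Set.subset_univ _)).trans (Set.ncard_univ X).le

theorem dHam_triangle (f g h : X → X) : dHam f h ≤ dHam f g + dHam g h := by
  rw [dHam, dHam, dHam, ← add_div]
  gcongr
  have hsub : {x | f x ≠ h x} ⊆ {x | f x ≠ g x} ∪ {x | g x ≠ h x} := by
    intro x hx
    by_contra hc
    simp_all
  exact_mod_cast (Set.ncard_le_ncard hsub).trans (Set.ncard_union_le _ _)

theorem dHam_comp_right_le [Nonempty X] {h : X → X} {ε : ℝ}
    (hh : ∀ E : Set X, |(E.ncard : ℝ) - ((h ⁻¹' E).ncard : ℝ)| ≤ ε * Nat.card X)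
    (f g : X → X) : dHam (f ∘ h) (g ∘ h) ≤ dHam f g + ε := by
  have hX : (0 : ℝ) < Nat.card X := by exact_mod_cast Nat.card_pos
  have hpre : ((h ⁻¹' {x | f x ≠ g x}).ncard : ℝ)
      ≤ ({x | f x ≠ g x}.ncard : ℝ) + ε * Nat.card X := by
    linarith [(abs_le.mp (hh {x | f x ≠ g x})).1]
  rw [dHam, dHam, div_add' _ _ _ hX.ne', div_le_div_iff_of_pos_right hX]
  exact hpre

end Hamming

section Perm

variable {X : Type}

theorem dHam_perm_mul_left (c a b : Equiv.Perm X) : dHam ⇑(c * a) ⇑(c * b) = dHam a b :=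
  dHam_comp_left_of_injective c.injective a b

theorem dHam_perm_mul_right (a b c : Equiv.Perm X) : dHam ⇑(a * c) ⇑(b * c) = dHam a b :=
  dHam_comp_right_of_bijective c.bijective a b

theorem dHam_perm_inv_mul_id (a b : Equiv.Perm X) : dHam ⇑(a⁻¹ * b) id = dHam a b := by
  rw [← Equiv.Perm.coe_one, ← inv_mul_cancel a, dHam_perm_mul_left, dHam_comm]

theorem dHam_perm_inv_id (a : Equiv.Perm X) : dHam ⇑a⁻¹ id = dHam a id := by
  simpa using dHam_perm_inv_mul_id a 1

theorem dHam_perm_conj_id (g n : Equiv.Perm X) : dHam ⇑(g * n * g⁻¹) id = dHam n id := by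
  calc dHam ⇑(g * n * g⁻¹) id = dHam ⇑(g * n * g⁻¹) ⇑(g * 1 * g⁻¹) := by
        rw [mul_one, mul_inv_cancel]; rfl
    _ = dHam n id := by rw [dHam_perm_mul_right, dHam_perm_mul_left]; rfl

theorem dHam_perm_mul_id_le [Finite X] (a b : Equiv.Perm X) :
    dHam ⇑(a * b) id ≤ dHam a id + dHam b id := by
  calc dHam ⇑(a * b) id ≤ dHam ⇑(a * b) ⇑(1 * b) + dHam ⇑(1 * b) id := dHam_triangle _ _ _
    _ = dHam a id + dHam b id := by rw [dHam_perm_mul_right, one_mul]; rfl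

end Perm

theorem exists_perm_dHam_le {X : Type} [Finite X] (f : X → X) :
    ∃ σ : Equiv.Perm X, dHam f σ ≤ ((Set.range f)ᶜ.ncard : ℝ) / Nat.card X := by
  have := Fintype.ofFinite X
  obtain ⟨S, -, hS⟩ := Set.exists_subset_bijOn Set.univ f
  obtain ⟨g, hg⟩ := Set.MapsTo.exists_equiv_extend_of_card_eq (t := Finset.univ)
    Finset.card_univ.symm (fun _ _ => Finset.mem_coe.2 (Finset.mem_univ _)) hS.injOn
  refine ⟨g.trans (Equiv.subtypeUnivEquiv Finset.mem_univ), ?_⟩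
  have hdisagree : {x | f x ≠ g x} ⊆ Sᶜ := fun x hx hxS => hx (hg x hxS).symm
  have hS_card : S.ncard = (Set.range f).ncard := by
    rw [← hS.injOn.ncard_image, hS.image_eq, Set.image_univ]
  refine div_le_div_of_nonneg_right ?_ (Nat.cast_nonneg _)
  exact_mod_cast calc {x | f x ≠ g x}.ncard ≤ Sᶜ.ncard := Set.ncard_le_ncard hdisagree
    _ = (Set.range f)ᶜ.ncard := by rw [Set.ncard_compl, Set.ncard_compl, hS_card]

section Amplification

variable {X : Type} [Finite X]

theorem dHam_comp_pi {ι : Type} [Finite ι] (f g : X → X) :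
    dHam (fun v : ι → X => f ∘ v) (fun v => g ∘ v) = 1 - (1 - dHam f g) ^ Nat.card ι := by
  rcases isEmpty_or_nonempty X with hX | hX
  · obtain rfl : f = g := funext isEmptyElim
    simp [dHam_self]
  have := Fintype.ofFinite ι
  have hX : (0 : ℝ) < Nat.card X := by exact_mod_cast Nat.card_pos
  set A := {x | f x = g x}
  have hagree : {v : ι → X | f ∘ v = g ∘ v} = Set.univ.pi fun _ => A := by
    ext v; simp [A, funext_iff]
  have hpi : (Set.univ.pi fun _ : ι => A).ncard = A.ncard ^ Nat.card ι := by
    rw [← Nat.card_coe_set_eq, Nat.card_congr (Equiv.Set.univPi _), Nat.card_pi]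
    simp
  have hsplit : A.ncard + {x | f x ≠ g x}.ncard = Nat.card X := Set.ncard_add_ncard_compl A
  have hsplit_pi : A.ncard ^ Nat.card ι + {v : ι → X | f ∘ v ≠ g ∘ v}.ncard
      = Nat.card X ^ Nat.card ι := by
    rw [← hpi, ← hagree, ← Nat.card_fun]
    exact Set.ncard_add_ncard_compl _
  have hD : ({x | f x ≠ g x}.ncard : ℝ) = Nat.card X - A.ncard :=
    eq_sub_of_add_eq' (by exact_mod_cast hsplit)
  have hD_pi : ({v : ι → X | f ∘ v ≠ g ∘ v}.ncard : ℝ)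
      = (Nat.card X : ℝ) ^ Nat.card ι - (A.ncard : ℝ) ^ Nat.card ι :=
    eq_sub_of_add_eq' (by exact_mod_cast hsplit_pi)
  rw [dHam, dHam, Nat.card_fun, Nat.cast_pow, hD, hD_pi, one_sub_div hX.ne', sub_sub_cancel,
    div_pow, sub_div, div_self (by positivity)]

end Amplification

theorem isKEAction_comp_pi {M : Type*} [Monoid M] {K : Finset M} {ε : ℝ} {X : Type} [Finite X]
    {ψ : M → X → X} {ι : Type} [Finite ι]
    (hmul : ∀ s ∈ K, ∀ t ∈ K, s * t ∈ K → Nat.card ι * dHam (ψ (s * t)) (ψ s ∘ ψ t) ≤ ε)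
    (hone : (1 : M) ∈ K → Nat.card ι * dHam (ψ 1) id ≤ ε)
    (hsep : ∀ s ∈ K, ∀ t ∈ K, s ≠ t → (1 - dHam (ψ s) (ψ t)) ^ Nat.card ι ≤ ε) :
    IsKEAction K ε (fun s (v : ι → X) => ψ s ∘ v) := by
  have hbernoulli (f g : X → X) :
      dHam (fun v : ι → X => f ∘ v) (fun v => g ∘ v) ≤ Nat.card ι * dHam f g := by
    have := one_add_mul_sub_le_pow (a := 1 - dHam f g)
      (by linarith [dHam_nonneg f g, dHam_le_one f g]) (Nat.card ι)
    rw [dHam_comp_pi]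
    linarith
  refine ⟨fun s hs t ht hst => ?_, fun h1 => (hbernoulli _ id).trans (hone h1),
    fun s hs t ht hst => ?_⟩
  · exact (hbernoulli (ψ (s * t)) (ψ s ∘ ψ t)).trans (hmul s hs t ht hst)
  · rw [dHam_comp_pi]
    linarith [hsep s hs t ht hst]

theorem Ultrafilter.eventually_one_sub_pow_le_of_not_tendsto_zero {ι : Type*}
    {U : Ultrafilter ι} {d : ι → ℝ} (h0 : ∀ i, 0 ≤ d i) (h1 : ∀ i, d i ≤ 1)
    (hd : ¬Tendsto d U (𝓝 0)) {ε : ℝ} (hε : 0 < ε) :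
    ∀ᶠ n in atTop, ∀ᶠ i in U, (1 - d i) ^ n ≤ ε := by
  obtain ⟨δ, hδ, hfar⟩ : ∃ δ > 0, ∀ᶠ i in U, δ ≤ d i := by
    -- `by_contra!` rewrites `¬∀ᶠ i in U, δ ≤ d i` to `∀ᶠ i in U, d i < δ` (`U` is an ultrafilter).
    by_contra! h
    exact hd (tendsto_order.2 ⟨fun a ha => .of_forall fun i => ha.trans_le (h0 i), h⟩)
  have hδ1 : δ ≤ 1 := hfar.exists.elim fun i hi => hi.trans (h1 i)
  have hpow := tendsto_pow_atTop_nhds_zero_of_lt_one (r := 1 - δ) (by linarith) (by linarith)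
  filter_upwards [hpow.eventually_le_const hε] with n hn
  filter_upwards [hfar] with i hi
  exact (pow_le_pow_left₀ (by linarith [h1 i]) (by linarith) n).trans hn

section HammingQuotient

variable {ι : Type*} (l : Filter ι) (X : ι → Type) [∀ i, Finite (X i)]

/-- The quotient by this subgroup is the metric ultraproduct (for an ultrafilter `l`) of the
symmetric groups of the `X i` with the normalized Hamming distance. -/
def hammingNull : Subgroup (∀ i, Equiv.Perm (X i)) where
  carrier := {g | Tendsto (fun i => dHam ⇑(g i) id) l (𝓝 0)}
  one_mem' := by simp [dHam_self, tendsto_const_nhds]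
  mul_mem' {a b} ha hb := squeeze_zero (fun i => dHam_nonneg _ _)
    (fun i => dHam_perm_mul_id_le (a i) (b i)) (by simpa using ha.add hb)
  inv_mem' {a} ha := by
    simpa only [Set.mem_ofPred_eq, Pi.inv_apply, dHam_perm_inv_id] using ha

variable {l X} in
theorem mem_hammingNull {g : ∀ i, Equiv.Perm (X i)} :
    g ∈ hammingNull l X ↔ Tendsto (fun i => dHam ⇑(g i) id) l (𝓝 0) :=
  Iff.rfl

instance : (hammingNull l X).Normal :=
  ⟨fun n hn g => by
    simpa only [mem_hammingNull, Pi.mul_apply, Pi.inv_apply, dHam_perm_conj_id] using hn⟩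

variable {l X}

theorem hammingNull.mk_eq_mk_iff {a b : ∀ i, Equiv.Perm (X i)} :
    (a : (∀ i, Equiv.Perm (X i)) ⧸ hammingNull l X) = b ↔
      Tendsto (fun i => dHam ⇑(a i) ⇑(b i)) l (𝓝 0) := by
  simp only [QuotientGroup.eq, mem_hammingNull, Pi.mul_apply, Pi.inv_apply, dHam_perm_inv_mul_id]

end HammingQuotient

theorem isSoficGroup_quotient_hammingNull {ι : Type*} (U : Ultrafilter ι) (X : ι → Type)
    [∀ i, Finite (X i)] [∀ i, Nonempty (X i)] :
    IsSoficGroup ((∀ i, Equiv.Perm (X i)) ⧸ hammingNull (U : Filter ι) X) := by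
  intro K ε hε
  let r : (∀ i, Equiv.Perm (X i)) ⧸ hammingNull (U : Filter ι) X → ∀ i, Equiv.Perm (X i) :=
    Quotient.out
  have hr (g) : (r g : (∀ i, Equiv.Perm (X i)) ⧸ hammingNull (U : Filter ι) X) = g :=
    QuotientGroup.out_eq' g
  have hnear {a b : ∀ i, Equiv.Perm (X i)}
      (h : (a : (∀ i, Equiv.Perm (X i)) ⧸ hammingNull (U : Filter ι) X) = b) (n : ℕ) :
      ∀ᶠ i in U, n * dHam ⇑(a i) ⇑(b i) ≤ ε := by
    have := (hammingNull.mk_eq_mk_iff.1 h).const_mul (n : ℝ)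
    rw [mul_zero] at this
    exact this.eventually_le_const hε
  have hfar (p) (hp : p ∈ K.offDiag) :
      ∀ᶠ n in atTop, ∀ᶠ i in U, (1 - dHam ⇑(r p.1 i) ⇑(r p.2 i)) ^ n ≤ ε := by
    refine Ultrafilter.eventually_one_sub_pow_le_of_not_tendsto_zero (fun i => dHam_nonneg _ _)
      (fun i => dHam_le_one _ _) ?_ hε
    rw [← hammingNull.mk_eq_mk_iff, hr, hr]
    exact (Finset.mem_offDiag.1 hp).2.2
  obtain ⟨n, hsep⟩ := ((Filter.eventually_all_finset K.offDiag).2 hfar).exists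
  have hmul : ∀ᶠ i in U, ∀ s ∈ K, ∀ t ∈ K, s * t ∈ K →
      n * dHam ⇑(r (s * t) i) (⇑(r s i) ∘ ⇑(r t i)) ≤ ε := by
    refine (Filter.eventually_all_finset K).2 fun s _ =>
      (Filter.eventually_all_finset K).2 fun t _ => ?_
    have hst : (r (s * t) : (∀ i, Equiv.Perm (X i)) ⧸ hammingNull (U : Filter ι) X)
        = ↑(r s * r t) := by
      rw [QuotientGroup.mk_mul, hr, hr, hr]
    exact (hnear hst n).mono fun i hi _ => by rwa [Pi.mul_apply, Equiv.Perm.coe_mul] at hi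
  have hone : ∀ᶠ i in U, (1 : _) ∈ K → n * dHam ⇑(r 1 i) id ≤ ε :=
    (hnear (b := 1) (by rw [hr, QuotientGroup.mk_one]) n).mono fun i hi _ => hi
  obtain ⟨i, hmul, hone, hsep⟩ :=
    (hmul.and (hone.and ((Filter.eventually_all_finset K.offDiag).2 hsep))).exists
  refine ⟨Fin n → X i, inferInstance, inferInstance, fun g v => ⇑(r g i) ∘ v,
    isKEAction_comp_pi ?_ ?_ ?_⟩ <;> rw [Nat.card_fin]
  · exact hmul
  · exact hone
  · exact fun s hs t ht hst => hsep (s, t) (Finset.mem_offDiag.2 ⟨hs, ht, hst⟩)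

theorem IsSofic3.exists_perm_approx {M : Type*} [Monoid M] (hM : IsSofic3 M) (K : Finset M)
    {ε : ℝ} (hε : 0 < ε) :
    ∃ (X : Type) (_ : Finite X) (_ : Nonempty X) (σ : M → Equiv.Perm X),
      (∀ a ∈ K, ∀ b ∈ K, a * b ∈ K → dHam ⇑(σ (a * b)) ⇑(σ a * σ b) ≤ 5 * ε) ∧
      (∀ a ∈ K, ∀ b ∈ K, a ≠ b → 1 - 3 * ε ≤ dHam ⇑(σ a) ⇑(σ b)) := by
  obtain ⟨X, _, _, ψ, ⟨hmul, -, hsep⟩, hinv⟩ := hM K ε hε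
  have hX : (0 : ℝ) < Nat.card X := by exact_mod_cast Nat.card_pos
  have hclose (s : M) : ∃ σ : Equiv.Perm X, s ∈ K → dHam (ψ s) σ ≤ ε := by
    by_cases hs : s ∈ K
    · obtain ⟨σ, hσ⟩ := exists_perm_dHam_le (ψ s)
      refine ⟨σ, fun _ => hσ.trans ?_⟩
      rw [div_le_iff₀ hX]
      simpa [Set.preimage_compl] using (abs_le.1 (hinv s hs (Set.range (ψ s))ᶜ)).2
    · exact ⟨1, fun h => absurd h hs⟩
  choose σ hσ using hclose
  refine ⟨X, inferInstance, inferInstance, σ, fun a ha b hb hab => ?_, fun a ha b hb hne => ?_⟩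
  · have h₁ : dHam ⇑(σ (a * b)) (ψ (a * b)) ≤ ε := dHam_comm (ψ (a * b)) _ ▸ hσ _ hab
    have h₂ : dHam (ψ a ∘ ψ b) (σ a ∘ ψ b) ≤ 2 * ε := by
      linarith [dHam_comp_right_le (hinv b hb) (ψ a) (σ a), hσ a ha]
    have h₃ : dHam (σ a ∘ ψ b) (σ a ∘ σ b) ≤ ε :=
      (dHam_comp_left_of_injective (σ a).injective _ _).trans_le (hσ b hb)
    rw [Equiv.Perm.coe_mul]
    linarith [hmul a ha b hb hab, dHam_triangle (σ (a * b)) (ψ (a * b)) (σ a ∘ σ b),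
      dHam_triangle (ψ (a * b)) (ψ a ∘ ψ b) (σ a ∘ σ b),
      dHam_triangle (ψ a ∘ ψ b) (σ a ∘ ψ b) (σ a ∘ σ b)]
  · linarith [hsep a ha b hb hne, hσ a ha, hσ b hb, dHam_comm (ψ b) (σ b),
      dHam_triangle (ψ a) (σ a) (ψ b), dHam_triangle (σ a) (σ b) (ψ b)]

/-- Every (3)-sofic monoid embeds into a sofic group: there are a sofic group `G` and
an injective multiplicative homomorphism `M → G`. -/
theorem sofic3_embeds_into_sofic_group {M : Type u} [Monoid M] (hM : IsSofic3 M) :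
    ∃ (G : Type u) (_ : Group G) (f : M → G),
      Function.Injective f ∧ (∀ a b : M, f (a * b) = f a * f b) ∧ IsSoficGroup G := by
  classical
  choose X _ _ σ hmul hsep using fun i : Finset M × ℕ =>
    hM.exists_perm_approx i.1 (Nat.one_div_pos_of_nat (α := ℝ) (n := i.2))
  let U := Ultrafilter.of (atTop : Filter (Finset M × ℕ))
  have hK (F : Finset M) : ∀ᶠ i : Finset M × ℕ in U, F ⊆ i.1 :=
    Ultrafilter.of_le _ ((eventually_ge_atTop (F, 0)).mono fun i hi => (Prod.le_def.1 hi).1)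
  have hε : Tendsto (fun i : Finset M × ℕ => 1 / ((i.2 : ℝ) + 1)) U (𝓝 0) :=
    (tendsto_one_div_add_atTop_nhds_zero_nat.comp
      (tendsto_atTop_atTop_of_monotone (fun _ _ h => (Prod.le_def.1 h).2)
        fun n => ⟨(∅, n), le_rfl⟩)).mono_left (Ultrafilter.of_le _)
  refine ⟨_, inferInstance, fun a => ((fun i => σ i a : ∀ i, Equiv.Perm (X i)) :
      (∀ i, Equiv.Perm (X i)) ⧸ hammingNull (U : Filter _) X),
    fun a b hab => ?_, fun a b => ?_, isSoficGroup_quotient_hammingNull U X⟩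
  · by_contra hne
    have hfar : ∀ᶠ i in U, 1 - 3 * (1 / ((i.2 : ℝ) + 1)) ≤ dHam ⇑(σ i a) ⇑(σ i b) :=
      (hK {a, b}).mono fun i hi => hsep i a (hi (by simp)) b (hi (by simp)) hne
    have := le_of_tendsto_of_tendsto (by simpa using (hε.const_mul 3).const_sub 1)
      (hammingNull.mk_eq_mk_iff.1 hab) hfar
    norm_num at this
  · rw [← QuotientGroup.mk_mul, hammingNull.mk_eq_mk_iff]
    refine squeeze_zero' (.of_forall fun i => dHam_nonneg _ _) ((hK {a, b, a * b}).mono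
      fun i hi => hmul i a (hi (by simp)) b (hi (by simp)) (hi (by simp))) ?_
    simpa using hε.const_mul 5
end

section
/- If a monoid M admits an injective multiplicative homomorphism into some sofic group, then M is (3)-sofic. -/
/-- From a bound on `dHam` extract a bound on the number of disagreement points. -/
lemma ncard_ne_le_of_dHam {X : Type} [Finite X] [Nonempty X] {u v : X → X} {ε : ℝ}
    (h : dHam u v ≤ ε) : (({x : X | u x ≠ v x}).ncard : ℝ) ≤ ε * Nat.card X := by
  have hN : (0 : ℝ) < Nat.card X := by exact_mod_cast Nat.card_pos
  rw [dHam, div_le_iff₀ hN] at h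
  exact h

/-- Counting lemma: if `h` and `k` are approximately inverse to each other, then
preimages under `h` approximately preserve cardinality. -/
lemma ncard_preimage_close {X : Type} [Finite X] (h k : X → X) (E : Set X) :
    ((h ⁻¹' E).ncard ≤ E.ncard + ({x | k (h x) ≠ x}).ncard) ∧
    (E.ncard ≤ (h ⁻¹' E).ncard + ({x | h (k x) ≠ x}).ncard) := by
  constructor
  · -- h⁻¹E ⊆ (h⁻¹E ∩ B) ∪ Bᶜ, and h is injective on B
    set B : Set X := {x | k (h x) = x}
    have hsub : h ⁻¹' E ⊆ (h ⁻¹' E ∩ B) ∪ {x | k (h x) ≠ x} := by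
      intro x hx
      by_cases hb : k (h x) = x
      · exact Or.inl ⟨hx, hb⟩
      · exact Or.inr hb
    have h1 : (h ⁻¹' E ∩ B).ncard ≤ E.ncard := by
      refine Set.ncard_le_ncard_of_injOn h (fun a ha => ha.1) ?_ (Set.toFinite _)
      intro a ha b hb hab
      calc a = k (h a) := ha.2.symm
        _ = k (h b) := by rw [hab]
        _ = b := hb.2
    calc (h ⁻¹' E).ncard ≤ ((h ⁻¹' E ∩ B) ∪ {x | k (h x) ≠ x}).ncard :=
          Set.ncard_le_ncard hsub (Set.toFinite _)
      _ ≤ (h ⁻¹' E ∩ B).ncard + ({x | k (h x) ≠ x}).ncard := Set.ncard_union_le _ _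
      _ ≤ E.ncard + ({x | k (h x) ≠ x}).ncard := by omega
  · set A : Set X := {x | h (k x) = x}
    have hsub : E ⊆ (E ∩ A) ∪ {x | h (k x) ≠ x} := by
      intro x hx
      by_cases ha : h (k x) = x
      · exact Or.inl ⟨hx, ha⟩
      · exact Or.inr ha
    have h1 : (E ∩ A).ncard ≤ (h ⁻¹' E).ncard := by
      refine Set.ncard_le_ncard_of_injOn k (fun a ha => ?_) ?_ (Set.toFinite _)
      · show h (k a) ∈ E
        rw [ha.2]; exact ha.1
      · intro a ha b hb hab
        calc a = h (k a) := ha.2.symm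
          _ = h (k b) := by rw [hab]
          _ = b := hb.2
    calc E.ncard ≤ ((E ∩ A) ∪ {x | h (k x) ≠ x}).ncard :=
          Set.ncard_le_ncard hsub (Set.toFinite _)
      _ ≤ (E ∩ A).ncard + ({x | h (k x) ≠ x}).ncard := Set.ncard_union_le _ _
      _ ≤ (h ⁻¹' E).ncard + ({x | h (k x) ≠ x}).ncard := by omega

/-- If a monoid `M` admits an injective multiplicative homomorphism into some sofic
group `G`, then `M` is (3)-sofic. -/
theorem sofic3_of_embeds_into_sofic_group {M : Type u} [Monoid M]
    (G : Type v) [Group G] (f : M → G)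
    (hmul : ∀ a b : M, f (a * b) = f a * f b) (hinj : Function.Injective f)
    (hG : IsSoficGroup G) : IsSofic3 M := by
  classical
  intro K ε hε
  have hf1 : f 1 = 1 := by
    have h : f 1 * f 1 = f 1 * 1 := by rw [mul_one, ← hmul, one_mul]
    exact mul_left_cancel h
  -- the finite subset of G
  set K' : Finset G := (K.image f) ∪ ((K.image f).image (·⁻¹)) ∪ {1} with hK'
  obtain ⟨X, hXfin, hXne, ψ, hψmul, hψone, hψsep⟩ := hG K' (ε/2) (by linarith)
  haveI := hXfin
  haveI := hXne
  have hN : (0 : ℝ) < Nat.card X := by exact_mod_cast Nat.card_pos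
  have hmem : ∀ s ∈ K, f s ∈ K' := fun s hs =>
    Finset.mem_union_left _ (Finset.mem_union_left _ (Finset.mem_image_of_mem f hs))
  have hmemInv : ∀ s ∈ K, (f s)⁻¹ ∈ K' := fun s hs =>
    Finset.mem_union_left _ (Finset.mem_union_right _
      (Finset.mem_image_of_mem _ (Finset.mem_image_of_mem f hs)))
  have hone : (1 : G) ∈ K' := by simp [hK']
  refine ⟨X, hXfin, hXne, fun s => ψ (f s), ⟨?_, ?_, ?_⟩, ?_⟩
  · intro s hs t ht hst
    have := hψmul (f s) (hmem s hs) (f t) (hmem t ht) (by rw [← hmul]; exact hmem _ hst)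
    rw [← hmul] at this
    linarith
  · intro h1
    show dHam (ψ (f 1)) id ≤ ε
    rw [hf1]
    have := hψone hone
    linarith
  · intro s hs t ht hne
    have := hψsep (f s) (hmem s hs) (f t) (hmem t ht) (fun h => hne (hinj h))
    linarith
  · -- approximate invariance
    intro s hs E
    -- disagreement sets for ψ(f s) ∘ ψ((f s)⁻¹) vs id and vice versa
    have key : ∀ g ∈ K', ∀ g' ∈ K', g * g' = 1 →
        (({x : X | ψ g (ψ g' x) ≠ x}).ncard : ℝ) ≤ ε * Nat.card X := by
      intro g hg g' hg' hgg
      have h1 := hψmul g hg g' hg' (by rw [hgg]; exact hone)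
      rw [hgg] at h1
      have h2 := hψone hone
      have hsub : {x : X | ψ g (ψ g' x) ≠ x} ⊆
          {x : X | ψ 1 x ≠ (ψ g ∘ ψ g') x} ∪ {x : X | ψ 1 x ≠ id x} := by
        intro x hx
        by_cases hc : ψ 1 x = ψ g (ψ g' x)
        · exact Or.inr (fun hid => hx (by rw [← hc]; exact hid))
        · exact Or.inl hc
      have hb1 := ncard_ne_le_of_dHam h1
      have hb2 := ncard_ne_le_of_dHam h2
      calc (({x : X | ψ g (ψ g' x) ≠ x}).ncard : ℝ)
          ≤ (({x : X | ψ 1 x ≠ (ψ g ∘ ψ g') x} ∪ {x : X | ψ 1 x ≠ id x}).ncard : ℝ) := by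
            exact_mod_cast Set.ncard_le_ncard hsub (Set.toFinite _)
        _ ≤ (({x : X | ψ 1 x ≠ (ψ g ∘ ψ g') x}).ncard : ℝ) +
            (({x : X | ψ 1 x ≠ id x}).ncard : ℝ) := by
            exact_mod_cast Set.ncard_union_le _ _
        _ ≤ ε/2 * Nat.card X + ε/2 * Nat.card X := add_le_add hb1 hb2
        _ = ε * Nat.card X := by ring
    have hA := key (f s) (hmem s hs) ((f s)⁻¹) (hmemInv s hs) (mul_inv_cancel (f s))
    have hB := key ((f s)⁻¹) (hmemInv s hs) (f s) (hmem s hs) (inv_mul_cancel (f s))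
    obtain ⟨hc1, hc2⟩ := ncard_preimage_close (ψ (f s)) (ψ ((f s)⁻¹)) E
    rw [abs_sub_le_iff]
    constructor
    · have : (E.ncard : ℝ) ≤ ((ψ (f s) ⁻¹' E).ncard : ℝ) +
          (({x : X | ψ (f s) (ψ ((f s)⁻¹) x) ≠ x}).ncard : ℝ) := by exact_mod_cast hc2
      linarith
    · have : (((ψ (f s)) ⁻¹' E).ncard : ℝ) ≤ (E.ncard : ℝ) +
          (({x : X | ψ ((f s)⁻¹) (ψ (f s) x) ≠ x}).ncard : ℝ) := by exact_mod_cast hc1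
      linarith
end

section
/- Let X be a nonempty finite set, ε > 0, K a finite set, and ψ : K → (X → X) a family of maps such that for every s ∈ K and every subset E ⊆ X one has | |E| − |ψ(s)⁻¹(E)| | ≤ ε·|X|. Then the set X₀ = {x ∈ X : for every s ∈ K, |ψ(s)⁻¹({x})| = 1} satisfies |X₀| ≥ (1 − 2|K|ε)·|X|. -/
open Finset

/-- Let `X` be a nonempty finite set, `ε > 0`, `K` a finite set, and `ψ` a family of
self-maps of `X` indexed by `K` such that the uniform probability measure on `X` is
approximately invariant under each `ψ s`: `| |E| - |ψ(s)⁻¹(E)| | ≤ ε * |X|` for every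
`E ⊆ X`.  Then the set `X₀` of points `x ∈ X` such that `|ψ(s)⁻¹({x})| = 1` for every
`s ∈ K` satisfies `|X₀| ≥ (1 - 2|K|ε) * |X|`. -/
theorem card_good_points_ge {X : Type} [Finite X] [Nonempty X]
    {S : Type*} (K : Finset S) (ε : ℝ) (hε : 0 < ε) (ψ : S → X → X)
    (hinv : ∀ s ∈ K, ∀ E : Set X,
      |(E.ncard : ℝ) - ((ψ s ⁻¹' E).ncard : ℝ)| ≤ ε * (Nat.card X : ℝ)) :
    (1 - 2 * (K.card : ℝ) * ε) * (Nat.card X : ℝ)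
      ≤ (({x : X | ∀ s ∈ K, (ψ s ⁻¹' {x}).ncard = 1}).ncard : ℝ) := by
  classical
  have : Fintype X := Fintype.ofFinite X
  have hn : Nat.card X = Fintype.card X := Nat.card_eq_fintype_card
  have hfib : ∀ (s : S) (x : X),
      (ψ s ⁻¹' {x}).ncard = (univ.filter (fun y => ψ s y = x)).card := by
    intro s x
    rw [Set.ncard_eq_toFinset_card']
    congr 1
    ext y; simp
  -- per-s bound on bad points
  have key : ∀ s ∈ K,
      ((univ.filter (fun x : X => (ψ s ⁻¹' {x}).ncard ≠ 1)).card : ℝ)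
        ≤ 2 * ε * (Nat.card X : ℝ) := by
    intro s hs
    set c : X → ℕ := fun x => (univ.filter (fun y => ψ s y = x)).card with hc
    have hsum : ∑ x, c x = Fintype.card X := by
      rw [Fintype.card, Finset.card_eq_sum_card_fiberwise (f := ψ s) (t := univ) (by simp)]
    set A : Finset X := univ.filter (fun x => c x = 0) with hA'
    set B : Finset X := univ.filter (fun x => 2 ≤ c x) with hB'
    have hA : (A.card : ℝ) ≤ ε * (Nat.card X : ℝ) := by
      have hpre : ψ s ⁻¹' (↑A : Set X) = ∅ := by
        ext y
        simp only [Set.mem_preimage, Set.mem_empty_iff_false, iff_false, Finset.mem_coe]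
        intro hy
        have h0 : c (ψ s y) = 0 := by
          simpa [hA'] using hy
        have hy' : y ∈ univ.filter (fun z => ψ s z = ψ s y) := by simp
        rw [hc] at h0
        simp only [Finset.card_eq_zero] at h0
        rw [h0] at hy'
        exact absurd hy' (Finset.notMem_empty y)
      have h := hinv s hs (↑A : Set X)
      rw [hpre, Set.ncard_coe_finset] at h
      simp only [Set.ncard_empty, Nat.cast_zero, sub_zero] at h
      calc (A.card : ℝ) ≤ |(A.card : ℝ)| := le_abs_self _
        _ ≤ ε * (Nat.card X : ℝ) := h
    have hBA : B.card ≤ A.card := by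
      have hsub : B ⊆ Aᶜ := by
        intro x hx
        simp only [hB', Finset.mem_filter] at hx
        simp only [Finset.mem_compl, hA', Finset.mem_filter, Finset.mem_univ, true_and]
        omega
      have hAc : ∑ x ∈ A, c x = 0 := by
        apply Finset.sum_eq_zero
        intro x hx
        simpa [hA'] using (Finset.mem_filter.mp hx).2
      have hsplit : ∑ x, c x = ∑ x ∈ A, c x + ∑ x ∈ Aᶜ, c x := by
        rw [← Finset.sum_add_sum_compl A c]
      have hsplit2 : ∑ x ∈ Aᶜ, c x = ∑ x ∈ B, c x + ∑ x ∈ Aᶜ \ B, c x := by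
        rw [← Finset.sum_sdiff hsub]
        ring
      have hBsum : 2 * B.card ≤ ∑ x ∈ B, c x := by
        calc 2 * B.card = ∑ _x ∈ B, 2 := by rw [Finset.sum_const]; ring
          _ ≤ ∑ x ∈ B, c x := Finset.sum_le_sum (fun x hx => by
              simpa [hB'] using (Finset.mem_filter.mp hx).2)
      have hrest : (Aᶜ \ B).card ≤ ∑ x ∈ Aᶜ \ B, c x := by
        calc (Aᶜ \ B).card = ∑ _x ∈ Aᶜ \ B, 1 := by simp
          _ ≤ ∑ x ∈ Aᶜ \ B, c x := Finset.sum_le_sum (fun x hx => by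
              have hx' := (Finset.mem_sdiff.mp hx).1
              have : c x ≠ 0 := by
                simpa [hA'] using (Finset.mem_compl.mp hx')
              omega)
      have hcard1 : Aᶜ.card = Fintype.card X - A.card := Finset.card_compl A
      have hcard2 : (Aᶜ \ B).card = Aᶜ.card - B.card := Finset.card_sdiff_of_subset hsub
      have hAle : A.card ≤ Fintype.card X := Finset.card_le_univ A
      have hBle : B.card ≤ Aᶜ.card := Finset.card_le_card hsub
      omega
    have hbad : (univ.filter (fun x : X => (ψ s ⁻¹' {x}).ncard ≠ 1)) ⊆ A ∪ B := by
      intro x hx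
      have hx' : c x ≠ 1 := by
        have := (Finset.mem_filter.mp hx).2
        rwa [hfib s x] at this
      simp only [Finset.mem_union, hA', hB', Finset.mem_filter, Finset.mem_univ, true_and]
      omega
    calc ((univ.filter (fun x : X => (ψ s ⁻¹' {x}).ncard ≠ 1)).card : ℝ)
        ≤ ((A ∪ B).card : ℝ) := by exact_mod_cast Finset.card_le_card hbad
      _ ≤ (A.card : ℝ) + (B.card : ℝ) := by exact_mod_cast Finset.card_union_le A B
      _ ≤ (A.card : ℝ) + (A.card : ℝ) := by
          have : (B.card : ℝ) ≤ (A.card : ℝ) := by exact_mod_cast hBA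
          linarith
      _ ≤ 2 * ε * (Nat.card X : ℝ) := by linarith
  -- assemble
  set G : Finset X := univ.filter (fun x : X => ∀ s ∈ K, (ψ s ⁻¹' {x}).ncard = 1) with hG'
  have hGset : ({x : X | ∀ s ∈ K, (ψ s ⁻¹' {x}).ncard = 1}).ncard = G.card := by
    rw [Set.ncard_eq_toFinset_card']
    congr 1
    ext x; simp [hG']
  have hGc : Gᶜ ⊆ K.biUnion (fun s => univ.filter (fun x : X => (ψ s ⁻¹' {x}).ncard ≠ 1)) := by
    intro x hx
    simp only [Finset.mem_compl, hG', Finset.mem_filter, Finset.mem_univ, true_and,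
      not_forall] at hx
    obtain ⟨s, hs, hne⟩ := hx
    simp only [Finset.mem_biUnion, Finset.mem_filter, Finset.mem_univ, true_and]
    exact ⟨s, hs, hne⟩
  have hGcard : ((Gᶜ).card : ℝ) ≤ (K.card : ℝ) * (2 * ε * (Nat.card X : ℝ)) := by
    calc ((Gᶜ).card : ℝ)
        ≤ ((K.biUnion (fun s => univ.filter (fun x : X => (ψ s ⁻¹' {x}).ncard ≠ 1))).card : ℝ) := by
          exact_mod_cast Finset.card_le_card hGc
      _ ≤ ∑ s ∈ K, ((univ.filter (fun x : X => (ψ s ⁻¹' {x}).ncard ≠ 1)).card : ℝ) := by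
          exact_mod_cast Finset.card_biUnion_le
      _ ≤ ∑ _s ∈ K, 2 * ε * (Nat.card X : ℝ) := Finset.sum_le_sum (fun s hs => key s hs)
      _ = (K.card : ℝ) * (2 * ε * (Nat.card X : ℝ)) := by rw [Finset.sum_const]; ring
  have hcompl : ((Gᶜ).card : ℝ) = (Nat.card X : ℝ) - (G.card : ℝ) := by
    rw [Finset.card_compl, hn]
    have := Finset.card_le_univ G
    push_cast [Nat.cast_sub this]
    ring
  rw [hGset]
  rw [hcompl] at hGcard
  nlinarith [hGcard]
end
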